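/- Let G have the (*)-relative hyperbolicity property with respect to H₁,…,H_m with constants σ, δ, and κ = σ + δ. If (g₁, η, g₂) is a central decomposition of g = hk arising from a geodesic triangle with sides 𝔮_g, 𝔮_h, h𝔮_k and coset γH_i, then there exists η' ∈ H_i such that, setting η'' = (η')⁻¹η and defining g₃ by h = g₁η'g₃, one has k = g₃⁻¹η''g₂; moreover g₁η' is within σ of the exit point B₂ of 𝔮_h from the closed σ-neighborhood of γH_i and within κ of the entrance point B₁ of h𝔮_k into that neighborhood. -/
import Mathlib


/-- Word length with respect to a finite generating set `S`. -/
noncomputable def wlen {G : Type*} [Group G] (S : Finset G) (g : G) : ℕ :=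
  sInf {n : ℕ | ∃ l : List G, (∀ x ∈ l, x ∈ S) ∧ l.prod = g ∧ l.length = n}

/-- Word metric on the Cayley graph of `(G, S)`. -/
noncomputable def wdist {G : Type*} [Group G] (S : Finset G) (g h : G) : ℕ :=
  wlen S (g⁻¹ * h)

/-- `f` restricted to `{0, …, n}` is a (discrete) geodesic in the Cayley graph. -/
def IsGeod {G : Type*} [Group G] (S : Finset G) (f : ℕ → G) (n : ℕ) : Prop :=
  ∀ i j : ℕ, i ≤ j → j ≤ n → wdist S (f i) (f j) = j - i

/-- A geodesic triangle: three geodesic sides, cyclically sharing endpoints. -/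
def IsTriangle {G : Type*} [Group G] (S : Finset G) (f₁ : ℕ → G) (n₁ : ℕ)
    (f₂ : ℕ → G) (n₂ : ℕ) (f₃ : ℕ → G) (n₃ : ℕ) : Prop :=
  IsGeod S f₁ n₁ ∧ IsGeod S f₂ n₂ ∧ IsGeod S f₃ n₃ ∧
    f₁ n₁ = f₂ 0 ∧ f₂ n₂ = f₃ 0 ∧ f₃ n₃ = f₁ 0

/-- `f j` is in the closed `σ`-neighborhood of `A`. -/
def NearSet {G : Type*} [Group G] (S : Finset G) (σ : ℝ) (A : Set G) (p : G) : Prop :=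
  ∃ a ∈ A, (wdist S p a : ℝ) ≤ σ

/-- `j` is the entrance index of the side `f` (of length `n`) into the closed
`σ`-neighborhood of `A`. -/
def IsEntrance {G : Type*} [Group G] (S : Finset G) (f : ℕ → G) (n : ℕ) (A : Set G)
    (σ : ℝ) (j : ℕ) : Prop :=
  j ≤ n ∧ NearSet S σ A (f j) ∧ ∀ j' < j, ¬ NearSet S σ A (f j')

/-- `j` is the exit index of the side `f` (of length `n`) from the closed
`σ`-neighborhood of `A`. -/
def IsExit {G : Type*} [Group G] (S : Finset G) (f : ℕ → G) (n : ℕ) (A : Set G)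
    (σ : ℝ) (j : ℕ) : Prop :=
  j ≤ n ∧ NearSet S σ A (f j) ∧ ∀ j' : ℕ, j < j' → j' ≤ n → ¬ NearSet S σ A (f j')

/-- The condition of property (*) for a geodesic triangle with (cyclically oriented)
sides `f₁, f₂, f₃` and the set `A` (a coset `gHᵢ`): the closed `σ`-neighborhood of `A`
meets all three sides, and at each vertex of the triangle the two nearby
entrance/exit points are at distance `< δ` from each other. -/
def StarCond {G : Type*} [Group G] (S : Finset G) (σ δ : ℝ) (f₁ : ℕ → G) (n₁ : ℕ)
    (f₂ : ℕ → G) (n₂ : ℕ) (f₃ : ℕ → G) (n₃ : ℕ) (A : Set G) : Prop :=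
  ∃ a₁ b₂ b₁ c₂ c₁ a₂ : ℕ,
    IsEntrance S f₁ n₁ A σ a₁ ∧ IsExit S f₁ n₁ A σ b₂ ∧
    IsEntrance S f₂ n₂ A σ b₁ ∧ IsExit S f₂ n₂ A σ c₂ ∧
    IsEntrance S f₃ n₃ A σ c₁ ∧ IsExit S f₃ n₃ A σ a₂ ∧
    (wdist S (f₁ a₁) (f₃ a₂) : ℝ) < δ ∧
    (wdist S (f₂ b₁) (f₁ b₂) : ℝ) < δ ∧
    (wdist S (f₃ c₁) (f₂ c₂) : ℝ) < δ

private lemma wlen_inv_le {G : Type*} [Group G] (S : Finset G)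
    (hsym : ∀ s ∈ S, s⁻¹ ∈ S)
    (hgen : ∀ g : G, ∃ l : List G, (∀ x ∈ l, x ∈ S) ∧ l.prod = g)
    (g : G) : wlen S g⁻¹ ≤ wlen S g := by
  unfold wlen
  have hne : {n : ℕ | ∃ l : List G, (∀ x ∈ l, x ∈ S) ∧ l.prod = g ∧ l.length = n}.Nonempty := by
    obtain ⟨l, hl, hp⟩ := hgen g
    exact ⟨l.length, l, hl, hp, rfl⟩
  obtain ⟨l, hl, hp, hlen⟩ := Nat.sInf_mem hne
  apply Nat.sInf_le
  refine ⟨(l.map (·⁻¹)).reverse, ?_, ?_, by simp [hlen]⟩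
  · intro x hx
    simp only [List.mem_reverse, List.mem_map] at hx
    obtain ⟨y, hy, rfl⟩ := hx
    exact hsym y (hl y hy)
  · rw [List.prod_reverse_noncomm]
    simp [hp]

private lemma wlen_inv {G : Type*} [Group G] (S : Finset G)
    (hsym : ∀ s ∈ S, s⁻¹ ∈ S)
    (hgen : ∀ g : G, ∃ l : List G, (∀ x ∈ l, x ∈ S) ∧ l.prod = g)
    (g : G) : wlen S g⁻¹ = wlen S g :=
  le_antisymm (wlen_inv_le S hsym hgen g)
    (by simpa using wlen_inv_le S hsym hgen g⁻¹)

private lemma wdist_symm {G : Type*} [Group G] (S : Finset G)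
    (hsym : ∀ s ∈ S, s⁻¹ ∈ S)
    (hgen : ∀ g : G, ∃ l : List G, (∀ x ∈ l, x ∈ S) ∧ l.prod = g)
    (x y : G) : wdist S x y = wdist S y x := by
  unfold wdist
  rw [← wlen_inv S hsym hgen (x⁻¹ * y)]
  simp

private lemma wlen_mul_le {G : Type*} [Group G] (S : Finset G)
    (hgen : ∀ g : G, ∃ l : List G, (∀ x ∈ l, x ∈ S) ∧ l.prod = g)
    (x y : G) : wlen S (x * y) ≤ wlen S x + wlen S y := by
  have hne : ∀ g : G,
      {n : ℕ | ∃ l : List G, (∀ x ∈ l, x ∈ S) ∧ l.prod = g ∧ l.length = n}.Nonempty := by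
    intro g
    obtain ⟨l, hl, hp⟩ := hgen g
    exact ⟨l.length, l, hl, hp, rfl⟩
  obtain ⟨lx, hlx, hpx, hlenx⟩ := Nat.sInf_mem (hne x)
  obtain ⟨ly, hly, hpy, hleny⟩ := Nat.sInf_mem (hne y)
  apply Nat.sInf_le
  refine ⟨lx ++ ly, ?_, by simp [hpx, hpy], by simp [wlen, hlenx, hleny]⟩
  intro z hz
  rcases List.mem_append.1 hz with h | h
  exacts [hlx z h, hly z h]

private lemma wdist_triangle {G : Type*} [Group G] (S : Finset G)
    (hgen : ∀ g : G, ∃ l : List G, (∀ x ∈ l, x ∈ S) ∧ l.prod = g)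
    (x y z : G) : wdist S x z ≤ wdist S x y + wdist S y z := by
  unfold wdist
  have : x⁻¹ * z = (x⁻¹ * y) * (y⁻¹ * z) := by group
  rw [this]
  exact wlen_mul_le S hgen _ _

/-- given a geodesic triangle with vertices `1, h, g = hk`, a coset
`A = γHᵢ` satisfying the conditions of property (*) (entrance/exit points pairwise
`δ`-close near each vertex), and a central decomposition `g = g₁ η g₂` with `g₁ ∈ A`
within `σ` of the entrance point of `𝔮_g` and `g₁η` within `σ` of its exit point,
there exists `η' ∈ Hᵢ` such that `g₁η'` is within `σ` of the exit point `B₂` of `𝔮_h`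
and within `κ = σ + δ` of the entrance point `B₁` of `h·𝔮_k`, and, setting
`η'' = η'⁻¹η` and `g₃ = (g₁η')⁻¹h` (so that `h = g₁η'g₃`), one has `k = g₃⁻¹η''g₂`. -/
theorem stmt15 {G : Type*} [Group G] (S : Finset G)
    (hsym : ∀ s ∈ S, s⁻¹ ∈ S)
    (hgen : ∀ g : G, ∃ l : List G, (∀ x ∈ l, x ∈ S) ∧ l.prod = g)
    {m : ℕ} (H : Fin m → Subgroup G) (σ δ : ℝ) (hσ : 0 ≤ σ) (hδ : 0 ≤ δ)
    (i : Fin m) (γ g h k g₁ η g₂ : G)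
    (A : Set G) (hA : A = {u : G | γ⁻¹ * u ∈ H i})
    (q : G → ℕ → G)
    (hq : ∀ g : G, IsGeod S (q g) (wlen S g) ∧ q g 0 = 1 ∧ q g (wlen S g) = g)
    (hgk : g = h * k)
    (eg xg eh xh ek xk : ℕ)
    (heg : IsEntrance S (q g) (wlen S g) A σ eg)
    (hxg : IsExit S (q g) (wlen S g) A σ xg)
    (heh : IsEntrance S (q h) (wlen S h) A σ eh)
    (hxh : IsExit S (q h) (wlen S h) A σ xh)
    (hek : IsEntrance S (fun j => h * q k j) (wlen S k) A σ ek)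
    (hxk : IsExit S (fun j => h * q k j) (wlen S k) A σ xk)
    (hA1A2 : (wdist S (q h eh) (q g eg) : ℝ) < δ)
    (hB1B2 : (wdist S (h * q k ek) (q h xh) : ℝ) < δ)
    (hC1C2 : (wdist S (q g xg) (h * q k xk) : ℝ) < δ)
    (hg₁A : g₁ ∈ A) (hg₁ : (wdist S g₁ (q g eg) : ℝ) ≤ σ)
    (hη : η ∈ H i) (hg₁η : (wdist S (g₁ * η) (q g xg) : ℝ) ≤ σ)
    (hdec : g = g₁ * η * g₂) :
    ∃ η' ∈ H i,
      (wdist S (g₁ * η') (q h xh) : ℝ) ≤ σ ∧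
      (wdist S (g₁ * η') (h * q k ek) : ℝ) ≤ σ + δ ∧
      k = ((g₁ * η')⁻¹ * h)⁻¹ * (η'⁻¹ * η) * g₂ := by
  obtain ⟨-, ⟨a, haA, hadist⟩, -⟩ := hxh
  refine ⟨g₁⁻¹ * a, ?_, ?_, ?_, ?_⟩
  · rw [hA] at hg₁A haA
    have h1 : γ⁻¹ * g₁ ∈ H i := hg₁A
    have h2 : γ⁻¹ * a ∈ H i := haA
    have : (γ⁻¹ * g₁)⁻¹ * (γ⁻¹ * a) ∈ H i := mul_mem (inv_mem h1) h2
    simpa [mul_assoc] using this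
  · have : g₁ * (g₁⁻¹ * a) = a := by group
    rw [this, wdist_symm S hsym hgen]
    exact hadist
  · have hea : g₁ * (g₁⁻¹ * a) = a := by group
    rw [hea]
    calc (wdist S a (h * q k ek) : ℝ)
        ≤ (wdist S a (q h xh) : ℝ) + (wdist S (q h xh) (h * q k ek) : ℝ) := by
          exact_mod_cast wdist_triangle S hgen a (q h xh) (h * q k ek)
      _ ≤ σ + δ := by
          have h1 : (wdist S a (q h xh) : ℝ) ≤ σ := by
            rw [wdist_symm S hsym hgen]; exact hadist
          have h2 : (wdist S (q h xh) (h * q k ek) : ℝ) ≤ δ := by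
            rw [wdist_symm S hsym hgen]; exact le_of_lt hB1B2
          linarith
  · have hk : k = h⁻¹ * g := by rw [hgk]; group
    rw [hk, hdec]; group
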